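/- If the best misfit Φ^† and the approximate misfit Φ^a both belong to L¹_{μ_θ}, then max{ d_KL(μ^a ‖ μ^†), d_KL(μ^† ‖ μ^a) } ≤ C · ‖ |O δ^†|²_{Σ_η^{−1}} ‖_{L¹_{μ_θ}}^{1/2}, where μ^† := (μ_θ)_{Φ^†}, μ^a := (μ_θ)_{Φ^a}, and C = 2^{1/2} · exp( 2‖Φ^†‖_{L¹_{μ_θ}} + 2‖Φ^a‖_{L¹_{μ_θ}} ) · ( ‖Φ^†‖_{L¹_{μ_θ}}^{1/2} + ‖Φ^a‖_{L¹_{μ_θ}}^{1/2} ). -/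

import Mathlib

open MeasureTheory Real Matrix ENNReal

open Classical in
/-- Kullback--Leibler divergence. -/
noncomputable def KLdiv {X : Type*} [MeasurableSpace X] (μ ν : Measure X) : ℝ≥0∞ :=
  if μ ≪ ν ∧ Integrable (fun x => Real.log ((μ.rnDeriv ν x).toReal)) μ
  then ENNReal.ofReal (∫ x, Real.log ((μ.rnDeriv ν x).toReal) ∂μ)
  else ⊤

/-- The posterior measure `μ_Φ` with density `exp (-Φ) / Z` w.r.t. `μ`. -/
noncomputable def posterior {X : Type*} [MeasurableSpace X] (μ : Measure X) (Φ : X → ℝ) :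
    Measure X :=
  μ.withDensity fun x => ENNReal.ofReal (Real.exp (-Φ x) / ∫ x', Real.exp (-Φ x') ∂μ)

/-!
Factor `Γ⁻¹ = Tᵀ T`: each misfit is half the squared Euclidean norm of a residual
`T (y - O (M θ))`, and `T (O δ)` is the difference of the two residuals.
Since `μ^a` is an exponential tilt of `μ^†`,
`d_KL(μ^a ‖ μ^†) = ∫ (Φ^† - Φ^a) dμ^a + log (Z^† / Z^a)`, and both terms are at most
`‖Φ^† - Φ^a‖_{L¹} / Z^a`, while Jensen gives `1 / Z^a ≤ exp ∫ Φ^a`.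
Finally `|‖u‖² - ‖v‖²| ≤ ‖u - v‖ (‖u‖ + ‖v‖)` and Cauchy–Schwarz in `L²(μ)` bound
`‖Φ^† - Φ^a‖_{L¹}` by `(∫ |O δ|²)^{1/2} (‖Φ^†‖^{1/2} + ‖Φ^a‖^{1/2}) / √2`.
-/

open scoped MatrixOrder in
theorem Matrix.PosSemidef.exists_dotProduct_mulVec_eq_norm_sq {m : Type*} [Fintype m]
    {S : Matrix m m ℝ} (hS : S.PosSemidef) :
    ∃ T : (m → ℝ) →L[ℝ] EuclideanSpace ℝ m, ∀ v, v ⬝ᵥ (S *ᵥ v) = ‖T v‖ ^ 2 := by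
  classical
  obtain ⟨B, rfl⟩ := CStarAlgebra.nonneg_iff_eq_star_mul_self.mp hS.nonneg
  refine ⟨(EuclideanSpace.equiv m ℝ).symm.toContinuousLinearMap.comp
    (LinearMap.toContinuousLinearMap B.mulVecLin), fun v => ?_⟩
  rw [EuclideanSpace.norm_sq_eq, star_eq_conjTranspose, conjTranspose_eq_transpose_of_trivial,
    ← mulVec_mulVec, dotProduct_mulVec, vecMul_transpose]
  simp [dotProduct, sq]

section L2

variable {X : Type*} [MeasurableSpace X] {μ : Measure X}

theorem integral_mul_le_sqrt_integral_sq_mul_sqrt_integral_sq {f g : X → ℝ}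
    (hf₀ : 0 ≤ᵐ[μ] f) (hg₀ : 0 ≤ᵐ[μ] g) (hf : MemLp f 2 μ) (hg : MemLp g 2 μ) :
    ∫ x, f x * g x ∂μ ≤ √(∫ x, f x ^ 2 ∂μ) * √(∫ x, g x ^ 2 ∂μ) := by
  have h := integral_mul_le_Lp_mul_Lq_of_nonneg Real.HolderConjugate.two_two hf₀ hg₀
    (by rwa [ENNReal.ofReal_ofNat]) (by rwa [ENNReal.ofReal_ofNat])
  simpa only [Real.rpow_two, ← Real.sqrt_eq_rpow] using h

theorem abs_norm_sq_sub_norm_sq_le {E : Type*} [SeminormedAddCommGroup E] (a b : E) :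
    |‖a‖ ^ 2 - ‖b‖ ^ 2| ≤ ‖a - b‖ * (‖a‖ + ‖b‖) := by
  rw [sq_sub_sq, abs_mul, abs_of_nonneg (by positivity : 0 ≤ ‖a‖ + ‖b‖), mul_comm]
  gcongr
  exact abs_norm_sub_norm_le a b

theorem integral_abs_norm_sq_sub_norm_sq_le {E : Type*} [NormedAddCommGroup E] {u v : X → E}
    (hu : MemLp u 2 μ) (hv : MemLp v 2 μ) :
    ∫ x, |‖u x‖ ^ 2 - ‖v x‖ ^ 2| ∂μ ≤
      √(∫ x, ‖u x - v x‖ ^ 2 ∂μ) * (√(∫ x, ‖u x‖ ^ 2 ∂μ) + √(∫ x, ‖v x‖ ^ 2 ∂μ)) := by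
  have hsq : ∀ {w : X → E}, MemLp w 2 μ → Integrable (fun x => ‖w x‖ ^ 2) μ :=
    fun hw => (memLp_two_iff_integrable_sq_norm hw.1).1 hw
  have hprod : ∀ {w : X → E}, MemLp w 2 μ → Integrable (fun x => ‖u x - v x‖ * ‖w x‖) μ :=
    fun hw => (hu.sub hv).norm.integrable_mul hw.norm
  have hCS : ∀ {w : X → E}, MemLp w 2 μ →
      ∫ x, ‖u x - v x‖ * ‖w x‖ ∂μ ≤ √(∫ x, ‖u x - v x‖ ^ 2 ∂μ) * √(∫ x, ‖w x‖ ^ 2 ∂μ) :=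
    fun hw => integral_mul_le_sqrt_integral_sq_mul_sqrt_integral_sq
      (ae_of_all _ fun _ => norm_nonneg _) (ae_of_all _ fun _ => norm_nonneg _)
      (hu.sub hv).norm hw.norm
  calc ∫ x, |‖u x‖ ^ 2 - ‖v x‖ ^ 2| ∂μ
      ≤ ∫ x, (‖u x - v x‖ * ‖u x‖ + ‖u x - v x‖ * ‖v x‖) ∂μ :=
        integral_mono ((hsq hu).sub (hsq hv)).abs ((hprod hu).add (hprod hv))
          fun x => (abs_norm_sq_sub_norm_sq_le (u x) (v x)).trans_eq (mul_add _ _ _)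
    _ = ∫ x, ‖u x - v x‖ * ‖u x‖ ∂μ + ∫ x, ‖u x - v x‖ * ‖v x‖ ∂μ :=
        integral_add (hprod hu) (hprod hv)
    _ ≤ _ := by rw [mul_add]; exact add_le_add (hCS hu) (hCS hv)

end L2

section Exponential

theorem exp_neg_sub_exp_neg_le {a b : ℝ} (ha : 0 ≤ a) : exp (-a) - exp (-b) ≤ |a - b| := by
  rcases le_total a b with hab | hab
  · have hb : exp (-b) = exp (-a) * exp (-(b - a)) := by rw [← exp_add]; ring_nf
    have h1 := add_one_le_exp (-(b - a))
    have h2 : exp (-a) ≤ 1 := exp_le_one_iff.2 (by linarith)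
    rw [abs_sub_comm, abs_of_nonneg (sub_nonneg.2 hab), hb]
    nlinarith [exp_pos (-a)]
  · exact (sub_nonpos.2 (exp_le_exp.2 (neg_le_neg hab))).trans (abs_nonneg _)

variable {X : Type*} [MeasurableSpace X] {μ : Measure X}

theorem exp_integral_le_integral_exp [IsProbabilityMeasure μ] {f : X → ℝ} (hf : Integrable f μ)
    (hef : Integrable (fun x => exp (f x)) μ) : exp (∫ x, f x ∂μ) ≤ ∫ x, exp (f x) ∂μ :=
  convexOn_exp.map_integral_le continuous_exp.continuousOn isClosed_univ
    (ae_of_all _ fun _ => Set.mem_univ _) hf hef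

theorem integrable_exp_neg_of_nonneg [IsFiniteMeasure μ] {φ : X → ℝ}
    (hφ : AEStronglyMeasurable φ μ) (hφ₀ : 0 ≤ φ) : Integrable (fun x => exp (-φ x)) μ :=
  (integrable_const 1).mono' (continuous_exp.comp_aestronglyMeasurable hφ.neg)
    (ae_of_all _ fun x => by simpa [abs_of_pos (exp_pos _)] using hφ₀ x)

theorem log_integral_exp_neg_div_le [IsProbabilityMeasure μ] {φ ψ : X → ℝ} (hφ₀ : 0 ≤ φ)
    (hψ₀ : 0 ≤ ψ) (hφ : Integrable φ μ) (hψ : Integrable ψ μ) :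
    log ((∫ x, exp (-φ x) ∂μ) / ∫ x, exp (-ψ x) ∂μ) ≤
      (∫ x, |φ x - ψ x| ∂μ) / ∫ x, exp (-ψ x) ∂μ := by
  have hexpφ := integrable_exp_neg_of_nonneg hφ.1 hφ₀
  have hexpψ := integrable_exp_neg_of_nonneg hψ.1 hψ₀
  have hZ := integral_exp_pos hexpψ
  have hdiff : (∫ x, exp (-φ x) ∂μ) - ∫ x, exp (-ψ x) ∂μ ≤ ∫ x, |φ x - ψ x| ∂μ := by
    rw [← integral_sub hexpφ hexpψ]
    exact integral_mono (hexpφ.sub hexpψ) (hφ.sub hψ).abs fun x => exp_neg_sub_exp_neg_le (hφ₀ x)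
  calc _ ≤ (∫ x, exp (-φ x) ∂μ) / (∫ x, exp (-ψ x) ∂μ) - 1 :=
        log_le_sub_one_of_pos (div_pos (integral_exp_pos hexpφ) hZ)
    _ = ((∫ x, exp (-φ x) ∂μ) - ∫ x, exp (-ψ x) ∂μ) / ∫ x, exp (-ψ x) ∂μ := by field_simp
    _ ≤ _ := by gcongr

end Exponential

section Posterior

variable {X : Type*} [MeasurableSpace X] {μ : Measure X}

theorem KLdiv_tilted_self [SigmaFinite μ] [NeZero μ] {f : X → ℝ}
    (hf : Integrable (fun x => exp (f x)) μ) (hfi : Integrable f (μ.tilted f)) :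
    KLdiv (μ.tilted f) μ = ENNReal.ofReal (∫ x, f x ∂μ.tilted f - log (∫ x, exp (f x) ∂μ)) := by
  have := isProbabilityMeasure_tilted hf
  have hac := tilted_absolutelyContinuous μ f
  have hlog := hac.ae_eq (log_rnDeriv_tilted_left_self hf)
  rw [KLdiv, if_pos ⟨hac, (hfi.sub (integrable_const _)).congr hlog.symm⟩,
    integral_congr_ae hlog, integral_sub hfi (integrable_const _)]
  simp

theorem posterior_eq_tilted (μ : Measure X) (Φ : X → ℝ) :
    posterior μ Φ = μ.tilted fun x => -Φ x := rfl

theorem posterior_eq_tilted_posterior {φ : X → ℝ} (hφ : Integrable (fun x => exp (-φ x)) μ)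
    (ψ : X → ℝ) : posterior μ ψ = (posterior μ φ).tilted (φ - ψ) := by
  rw [posterior_eq_tilted, posterior_eq_tilted, tilted_tilted hφ]
  congr with x
  simp only [Pi.add_apply, Pi.sub_apply]
  ring

theorem integrable_exp_sub_posterior {φ ψ : X → ℝ} (hφ : Integrable (fun x => exp (-φ x)) μ)
    (hψ : Integrable (fun x => exp (-ψ x)) μ) :
    Integrable (fun x => exp ((φ - ψ) x)) (posterior μ φ) := by
  rw [posterior_eq_tilted, integrable_tilted_iff hφ]
  refine hψ.congr (ae_of_all _ fun x => ?_)
  simp only [Pi.sub_apply, smul_eq_mul, ← exp_add]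
  ring_nf

theorem integral_exp_sub_posterior (φ ψ : X → ℝ) :
    ∫ x, exp ((φ - ψ) x) ∂posterior μ φ = (∫ x, exp (-ψ x) ∂μ) / ∫ x, exp (-φ x) ∂μ := by
  rw [posterior_eq_tilted, integral_exp_tilted]
  congr with x
  simp only [Pi.add_apply, Pi.sub_apply]
  ring_nf

theorem posterior_le_smul {ψ : X → ℝ} (hψ₀ : 0 ≤ ψ) :
    posterior μ ψ ≤ ENNReal.ofReal (∫ x, exp (-ψ x) ∂μ)⁻¹ • μ := by
  rw [posterior, ← withDensity_const]
  refine withDensity_mono (ae_of_all _ fun x => ENNReal.ofReal_le_ofReal ?_)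
  rw [div_eq_inv_mul]
  exact mul_le_of_le_one_right (inv_nonneg.2 (integral_nonneg fun _ => (exp_pos _).le))
    (exp_le_one_iff.2 (neg_nonpos.2 (hψ₀ x)))

theorem integrable_posterior {ψ g : X → ℝ} (hψ₀ : 0 ≤ ψ) (hg : Integrable g μ) :
    Integrable g (posterior μ ψ) :=
  (hg.smul_measure ENNReal.ofReal_ne_top).mono_measure (posterior_le_smul hψ₀)

theorem integral_posterior_le {ψ g : X → ℝ} (hψ₀ : 0 ≤ ψ) (hg : Integrable g μ) :
    ∫ x, g x ∂posterior μ ψ ≤ (∫ x, |g x| ∂μ) / ∫ x, exp (-ψ x) ∂μ := by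
  have hZ : 0 ≤ (∫ x, exp (-ψ x) ∂μ)⁻¹ := inv_nonneg.2 (integral_nonneg fun _ => (exp_pos _).le)
  calc ∫ x, g x ∂posterior μ ψ ≤ ∫ x, |g x| ∂posterior μ ψ :=
        integral_mono (integrable_posterior hψ₀ hg) (integrable_posterior hψ₀ hg.abs)
          fun x => le_abs_self (g x)
    _ ≤ ∫ x, |g x| ∂(ENNReal.ofReal (∫ x, exp (-ψ x) ∂μ)⁻¹ • μ) :=
        integral_mono_measure (posterior_le_smul hψ₀) (ae_of_all _ fun x => abs_nonneg (g x))
          (hg.abs.smul_measure ENNReal.ofReal_ne_top)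
    _ = _ := by rw [integral_smul_measure, ENNReal.toReal_ofReal hZ, smul_eq_mul, div_eq_inv_mul]

theorem KLdiv_posterior_le [IsProbabilityMeasure μ] {φ ψ : X → ℝ} (hφ₀ : 0 ≤ φ) (hψ₀ : 0 ≤ ψ)
    (hφ : Integrable φ μ) (hψ : Integrable ψ μ) :
    KLdiv (posterior μ ψ) (posterior μ φ) ≤
      ENNReal.ofReal (2 * exp (∫ x, ψ x ∂μ) * ∫ x, |φ x - ψ x| ∂μ) := by
  set Z := ∫ x, exp (-ψ x) ∂μ
  set D := ∫ x, |φ x - ψ x| ∂μ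
  have hexpφ := integrable_exp_neg_of_nonneg hφ.1 hφ₀
  have hexpψ := integrable_exp_neg_of_nonneg hψ.1 hψ₀
  have hZ : 0 < Z := integral_exp_pos hexpψ
  have : IsProbabilityMeasure (posterior μ φ) := isProbabilityMeasure_tilted hexpφ
  have hKL := KLdiv_tilted_self (integrable_exp_sub_posterior hexpφ hexpψ)
    (by rw [← posterior_eq_tilted_posterior hexpφ]; exact integrable_posterior hψ₀ (hφ.sub hψ))
  rw [← posterior_eq_tilted_posterior hexpφ, integral_exp_sub_posterior] at hKL
  rw [hKL]
  refine ENNReal.ofReal_le_ofReal ?_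
  have hmean : ∫ x, (φ - ψ) x ∂posterior μ ψ ≤ D / Z := integral_posterior_le hψ₀ (hφ.sub hψ)
  have hlog : -log (Z / ∫ x, exp (-φ x) ∂μ) ≤ D / Z := by
    rw [← Real.log_inv, inv_div]
    exact log_integral_exp_neg_div_le hφ₀ hψ₀ hφ hψ
  have hZ_inv : Z⁻¹ ≤ exp (∫ x, ψ x ∂μ) := by
    rw [inv_le_comm₀ hZ (exp_pos _), ← Real.exp_neg, ← integral_neg]
    exact exp_integral_le_integral_exp hψ.neg hexpψ
  calc _ ≤ D / Z + D / Z := by linarith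
    _ = 2 * Z⁻¹ * D := by ring
    _ ≤ 2 * exp (∫ x, ψ x ∂μ) * D := by gcongr

end Posterior

section HalfSquaredNorm

variable {X : Type*} [MeasurableSpace X] {μ : Measure X}
  {E : Type*} [NormedAddCommGroup E] {u v : X → E} {φ ψ : X → ℝ}

theorem integral_abs_sub_le_of_eq_half_norm_sq (hu : MemLp u 2 μ) (hv : MemLp v 2 μ)
    (hφ : ∀ x, φ x = ‖u x‖ ^ 2 / 2) (hψ : ∀ x, ψ x = ‖v x‖ ^ 2 / 2) :
    ∫ x, |φ x - ψ x| ∂μ ≤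
      √2 / 2 * √(∫ x, ‖u x - v x‖ ^ 2 ∂μ) * (√(∫ x, φ x ∂μ) + √(∫ x, ψ x ∂μ)) := by
  have hsq : ∀ {w : X → E} {χ : X → ℝ}, (∀ x, χ x = ‖w x‖ ^ 2 / 2) →
      ∫ x, ‖w x‖ ^ 2 ∂μ = 2 * ∫ x, χ x ∂μ := fun hχ => by
    rw [← integral_const_mul]; congr with x; rw [hχ]; ring
  have habs : ∫ x, |φ x - ψ x| ∂μ = (∫ x, |‖u x‖ ^ 2 - ‖v x‖ ^ 2| ∂μ) / 2 := by
    rw [← integral_div]; congr with x; rw [hφ, hψ, ← sub_div, abs_div, abs_two]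
  rw [habs, div_le_iff₀ two_pos]
  refine (integral_abs_norm_sq_sub_norm_sq_le hu hv).trans_eq ?_
  rw [hsq hφ, hsq hψ, Real.sqrt_mul zero_le_two, Real.sqrt_mul zero_le_two]
  field_simp

theorem max_KLdiv_posterior_le_of_eq_half_norm_sq [IsProbabilityMeasure μ]
    (hu : MemLp u 2 μ) (hv : MemLp v 2 μ)
    (hφ : ∀ x, φ x = ‖u x‖ ^ 2 / 2) (hψ : ∀ x, ψ x = ‖v x‖ ^ 2 / 2) :
    max (KLdiv (posterior μ ψ) (posterior μ φ)) (KLdiv (posterior μ φ) (posterior μ ψ)) ≤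
      ENNReal.ofReal (√2 * exp (2 * ∫ x, φ x ∂μ + 2 * ∫ x, ψ x ∂μ) *
        (√(∫ x, φ x ∂μ) + √(∫ x, ψ x ∂μ)) * √(∫ x, ‖u x - v x‖ ^ 2 ∂μ)) := by
  have hφ₀ : 0 ≤ φ := fun x => by rw [hφ]; positivity
  have hψ₀ : 0 ≤ ψ := fun x => by rw [hψ]; positivity
  have hφi : Integrable φ μ := (((memLp_two_iff_integrable_sq_norm hu.1).1 hu).div_const 2).congr
    (ae_of_all _ fun x => (hφ x).symm)
  have hψi : Integrable ψ μ := (((memLp_two_iff_integrable_sq_norm hv.1).1 hv).div_const 2).congr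
    (ae_of_all _ fun x => (hψ x).symm)
  have hA := integral_nonneg (μ := μ) hφ₀
  have hB := integral_nonneg (μ := μ) hψ₀
  have hD := integral_abs_sub_le_of_eq_half_norm_sq hu hv hφ hψ
  have hbound : ∀ c, c ≤ 2 * ∫ x, φ x ∂μ + 2 * ∫ x, ψ x ∂μ →
      ENNReal.ofReal (2 * exp c * ∫ x, |φ x - ψ x| ∂μ) ≤
        ENNReal.ofReal (√2 * exp (2 * ∫ x, φ x ∂μ + 2 * ∫ x, ψ x ∂μ) *
          (√(∫ x, φ x ∂μ) + √(∫ x, ψ x ∂μ)) * √(∫ x, ‖u x - v x‖ ^ 2 ∂μ)) := fun c hc => by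
    refine ENNReal.ofReal_le_ofReal ?_
    calc 2 * exp c * ∫ x, |φ x - ψ x| ∂μ
        ≤ 2 * exp (2 * ∫ x, φ x ∂μ + 2 * ∫ x, ψ x ∂μ) *
            (√2 / 2 * √(∫ x, ‖u x - v x‖ ^ 2 ∂μ) * (√(∫ x, φ x ∂μ) + √(∫ x, ψ x ∂μ))) := by
          gcongr
      _ = _ := by ring
  refine max_le ((KLdiv_posterior_le hφ₀ hψ₀ hφi hψi).trans (hbound _ (by linarith))) ?_
  refine (KLdiv_posterior_le hψ₀ hφ₀ hψi hφi).trans ?_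
  simp_rw [abs_sub_comm (ψ _)]
  exact hbound _ (by linarith)

end HalfSquaredNorm

theorem stmt3_general {X U : Type*} [MeasurableSpace X] [NormedAddCommGroup U] [NormedSpace ℝ U]
    [MeasurableSpace U] [BorelSpace U]
    (μ : Measure X) [IsProbabilityMeasure μ] {n : ℕ}
    (Mdag Mappr : X → U) (hMdag : Measurable Mdag) (hMappr : Measurable Mappr)
    (O : U →L[ℝ] (Fin n → ℝ)) (y : Fin n → ℝ)
    (Γ : Matrix (Fin n) (Fin n) ℝ) (hΓ : Γ.PosDef)
    (Φdag Φappr : X → ℝ)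
    (hΦdag : Φdag = fun θ => (1/2) * ((y - O (Mdag θ)) ⬝ᵥ (Γ⁻¹ *ᵥ (y - O (Mdag θ)))))
    (hΦappr : Φappr = fun θ => (1/2) * ((y - O (Mappr θ)) ⬝ᵥ (Γ⁻¹ *ᵥ (y - O (Mappr θ)))))
    (hid : Integrable Φdag μ) (hia : Integrable Φappr μ) :
    max (KLdiv (posterior μ Φappr) (posterior μ Φdag))
        (KLdiv (posterior μ Φdag) (posterior μ Φappr)) ≤
      ENNReal.ofReal
        ((Real.sqrt 2 * Real.exp (2 * (∫ θ, |Φdag θ| ∂μ) + 2 * ∫ θ, |Φappr θ| ∂μ) *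
            (Real.sqrt (∫ θ, |Φdag θ| ∂μ) + Real.sqrt (∫ θ, |Φappr θ| ∂μ))) *
          Real.sqrt (∫ θ, |(O (Mdag θ - Mappr θ)) ⬝ᵥ (Γ⁻¹ *ᵥ (O (Mdag θ - Mappr θ)))| ∂μ)) := by
  obtain ⟨T, hT⟩ := hΓ.inv.posSemidef.exists_dotProduct_mulVec_eq_norm_sq
  set r : (X → U) → X → EuclideanSpace ℝ (Fin n) := fun M θ => T (y - O (M θ))
  have hΦ : ∀ {M : X → U} {Φ : X → ℝ},
      Φ = (fun θ => (1/2) * ((y - O (M θ)) ⬝ᵥ (Γ⁻¹ *ᵥ (y - O (M θ))))) →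
      ∀ θ, Φ θ = ‖r M θ‖ ^ 2 / 2 := fun hΦ θ => by simp only [hΦ, hT, r]; ring
  have hmem : ∀ {M : X → U} {Φ : X → ℝ}, Measurable M → Integrable Φ μ →
      (∀ θ, Φ θ = ‖r M θ‖ ^ 2 / 2) → MemLp (r M) 2 μ := fun hM hi hΦ =>
    (memLp_two_iff_integrable_sq_norm (by fun_prop)).2
      ((hi.const_mul 2).congr (ae_of_all _ fun θ => by simp only [hΦ]; ring))
  have hδ : ∀ θ, (O (Mdag θ - Mappr θ)) ⬝ᵥ (Γ⁻¹ *ᵥ (O (Mdag θ - Mappr θ))) =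
      ‖r Mdag θ - r Mappr θ‖ ^ 2 := fun θ => by
    rw [hT, norm_sub_rev]
    simp only [r, ← map_sub]
    rw [map_sub O]
    congr 3
    abel
  have habs : ∀ {M : X → U} {Φ : X → ℝ}, (∀ θ, Φ θ = ‖r M θ‖ ^ 2 / 2) →
      ∫ θ, |Φ θ| ∂μ = ∫ θ, Φ θ ∂μ := fun hΦ =>
    integral_congr_ae (ae_of_all _ fun θ => abs_of_nonneg (by rw [hΦ]; positivity))
  simp_rw [hδ, abs_sq, habs (hΦ hΦdag), habs (hΦ hΦappr)]
  exact max_KLdiv_posterior_le_of_eq_half_norm_sq (hmem hMdag hid (hΦ hΦdag))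
    (hmem hMappr hia (hΦ hΦappr)) (hΦ hΦdag) (hΦ hΦappr)

theorem stmt3 {X U : Type*} [MeasurableSpace X] [NormedAddCommGroup U] [NormedSpace ℝ U]
    [CompleteSpace U] [MeasurableSpace U] [BorelSpace U]
    (μ : Measure X) [IsProbabilityMeasure μ] {n : ℕ}
    (Mdag Mappr : X → U) (hMdag : Measurable Mdag) (hMappr : Measurable Mappr)
    (O : U →L[ℝ] (Fin n → ℝ)) (y : Fin n → ℝ)
    (Γ : Matrix (Fin n) (Fin n) ℝ) (hΓ : Γ.PosDef)
    (Φdag Φappr : X → ℝ)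
    (hΦdag : Φdag = fun θ => (1/2) * ((y - O (Mdag θ)) ⬝ᵥ (Γ⁻¹ *ᵥ (y - O (Mdag θ)))))
    (hΦappr : Φappr = fun θ => (1/2) * ((y - O (Mappr θ)) ⬝ᵥ (Γ⁻¹ *ᵥ (y - O (Mappr θ)))))
    (hid : Integrable Φdag μ) (hia : Integrable Φappr μ) :
    max (KLdiv (posterior μ Φappr) (posterior μ Φdag))
        (KLdiv (posterior μ Φdag) (posterior μ Φappr)) ≤
      ENNReal.ofReal
        ((Real.sqrt 2 * Real.exp (2 * (∫ θ, |Φdag θ| ∂μ) + 2 * ∫ θ, |Φappr θ| ∂μ) *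
            (Real.sqrt (∫ θ, |Φdag θ| ∂μ) + Real.sqrt (∫ θ, |Φappr θ| ∂μ))) *
          Real.sqrt (∫ θ, |(O (Mdag θ - Mappr θ)) ⬝ᵥ (Γ⁻¹ *ᵥ (O (Mdag θ - Mappr θ)))| ∂μ)) :=
  stmt3_general μ Mdag Mappr hMdag hMappr O y Γ hΓ Φdag Φappr hΦdag hΦappr hid hia
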